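/- arXiv:1807.09737 — 5 statements merged into one kernel-verified Lean document; each statement's English description precedes it below -/
import Mathlib

section
/- Let (X,d) be a non-empty complete metric space and let T_n : X → X, n ∈ ℕ, be a sequence of L_n-Lipschitz contractions with sup_n L_n ≤ L̄ < 1. Let u_n be the fixed point of T_n (which exists by the Banach fixed-point theorem), and assume u_n converges to u* ∈ X. Then for every x_0 ∈ X, the recursively defined sequence x_n := T_n(x_{n-1}) converges to u*. -/
open scoped NNReal
open Filter

lemma aux_seq (r : ℝ) (hr0 : 0 ≤ r) (hr1 : r < 1) (a b : ℕ → ℝ)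
    (ha : ∀ n, 0 ≤ a n) (hab : ∀ n, a (n + 1) ≤ r * a n + b n)
    (hb : Tendsto b atTop (nhds 0)) : Tendsto a atTop (nhds 0) := by
  rw [Metric.tendsto_atTop]
  intro ε hε
  have h1r : 0 < 1 - r := by linarith
  have hεr : 0 < (1 - r) * ε / 2 := by positivity
  obtain ⟨N, hN⟩ := (Metric.tendsto_atTop.mp hb) _ hεr
  have hN' : ∀ n ≥ N, b n < (1 - r) * ε / 2 := by
    intro n hn
    have := hN n hn
    rw [Real.dist_eq, sub_zero] at this
    exact lt_of_le_of_lt (le_abs_self _) this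
  have key : ∀ k, a (N + k) ≤ r ^ k * a N + ε / 2 := by
    intro k
    induction k with
    | zero => simp; linarith [hε]
    | succ k ih =>
        have h1 : a (N + k + 1) ≤ r * a (N + k) + b (N + k) := hab _
        have h2 : b (N + k) < (1 - r) * ε / 2 := hN' _ (Nat.le_add_right _ _)
        have h3 : r * a (N + k) ≤ r * (r ^ k * a N + ε / 2) :=
          mul_le_mul_of_nonneg_left ih hr0
        have : a (N + (k + 1)) = a (N + k + 1) := by ring_nf
        rw [this]
        have : r * (r ^ k * a N + ε / 2) = r ^ (k + 1) * a N + r * (ε / 2) := by ring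
        nlinarith [ha (N + k)]
  obtain ⟨K, hK⟩ := (Metric.tendsto_atTop.mp
    (Tendsto.mul_const (a N) (tendsto_pow_atTop_nhds_zero_of_lt_one hr0 hr1))) _ (by positivity : (0:ℝ) < ε / 2)
  refine ⟨N + K, fun n hn => ?_⟩
  have hk : K ≤ n - N := by omega
  have hnN : n = N + (n - N) := by omega
  have h1 : a n ≤ r ^ (n - N) * a N + ε / 2 := by
    have := key (n - N); rwa [← hnN] at this
  have h3 : r ^ K * a N < ε / 2 := by
    have := hK K le_rfl
    rw [zero_mul, Real.dist_eq, sub_zero] at this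
    exact lt_of_le_of_lt (le_abs_self _) this
  have h2 : r ^ (n - N) * a N < ε / 2 := by
    rcases le_or_gt (a N) 0 with h | h
    · have haN : a N = 0 := le_antisymm h (ha N)
      rw [haN, mul_zero]; linarith
    · have := pow_le_pow_of_le_one hr0 hr1.le hk
      nlinarith
  rw [Real.dist_eq, sub_zero, abs_of_nonneg (ha n)]
  linarith

/-- Generalization of the Banach fixed-point theorem to a sequence of contractions
with uniformly bounded Lipschitz constants whose fixed points converge. -/
theorem stmt0 {X : Type*} [MetricSpace X] [CompleteSpace X] [Nonempty X]
    (T : ℕ → X → X) (L : ℕ → ℝ≥0) (Lbar : ℝ≥0) (hLbar : Lbar < 1)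
    (hLip : ∀ n, LipschitzWith (L n) (T n)) (hL : ∀ n, L n ≤ Lbar)
    (u : ℕ → X) (hu : ∀ n, T n (u n) = u n) (ustar : X)
    (huconv : Filter.Tendsto u Filter.atTop (nhds ustar))
    (x₀ : X) (x : ℕ → X) (hx0 : x 0 = x₀) (hx : ∀ n, x (n + 1) = T (n + 1) (x n)) :
    Filter.Tendsto x Filter.atTop (nhds ustar) := by
  set r : ℝ := (Lbar : ℝ) with hr
  have hr0 : 0 ≤ r := Lbar.coe_nonneg
  have hr1 : r < 1 := by exact_mod_cast hLbar
  set a : ℕ → ℝ := fun n => dist (x n) (u n) with ha'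
  set b : ℕ → ℝ := fun n => dist (u n) (u (n + 1)) with hb'
  have hb : Tendsto b atTop (nhds 0) := by
    have h1 : Tendsto (fun n => u (n + 1)) atTop (nhds ustar) :=
      huconv.comp (tendsto_add_atTop_nat 1)
    have := (huconv.dist h1)
    simpa using this
  have hab : ∀ n, a (n + 1) ≤ r * a n + b n := by
    intro n
    have h1 : dist (x (n + 1)) (u (n + 1)) ≤ (L (n + 1) : ℝ) * dist (x n) (u (n + 1)) := by
      have := (hLip (n + 1)).dist_le_mul (x n) (u (n + 1))
      rw [hx n] at *
      calc dist (T (n+1) (x n)) (u (n+1)) = dist (T (n+1) (x n)) (T (n+1) (u (n+1))) := by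
            rw [hu (n+1)]
        _ ≤ (L (n + 1) : ℝ) * dist (x n) (u (n + 1)) := (hLip (n + 1)).dist_le_mul _ _
    have h2 : (L (n + 1) : ℝ) ≤ r := by exact_mod_cast hL (n + 1)
    have h3 : dist (x n) (u (n + 1)) ≤ a n + b n := dist_triangle _ _ _
    have h4 : (L (n + 1) : ℝ) * dist (x n) (u (n + 1)) ≤ r * (a n + b n) := by
      apply mul_le_mul h2 h3 dist_nonneg hr0
    have h5 : r * (a n + b n) ≤ r * a n + b n := by
      have : r * b n ≤ b n := by nlinarith [dist_nonneg (x := u n) (y := u (n+1))]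
      linarith
    calc a (n + 1) ≤ (L (n + 1) : ℝ) * dist (x n) (u (n + 1)) := h1
      _ ≤ r * (a n + b n) := h4
      _ ≤ r * a n + b n := h5
  have haz : Tendsto a atTop (nhds 0) :=
    aux_seq r hr0 hr1 a b (fun n => dist_nonneg) hab hb
  rw [tendsto_iff_dist_tendsto_zero]
  apply squeeze_zero (fun n => dist_nonneg) (fun n => dist_triangle (x n) (u n) ustar)
  have : Tendsto (fun n => dist (u n) ustar) atTop (nhds 0) :=
    tendsto_iff_dist_tendsto_zero.mp huconv
  simpa using haz.add this
end

section
/- Let f : ℝ^d → ℝ^d be L-Lipschitz and let Φ_h denote the time-h flow of u' = f(u). Define the norm |||a|||_h := ‖a_0‖ + h‖a_1‖ on pairs a = (a_0, a_1) ∈ ℝ^d × ℝ^d, and the joint flow map 𝚽_h(a) := (Φ_h(a), f(Φ_h(a))). Then there exists K > 0 such that for all sufficiently small h > 0 and all a ≠ b ∈ ℝ^d, |||𝚽_h(a) − 𝚽_h(b)|||_h ≤ (1 + Kh)‖a − b‖. -/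
open scoped NNReal

lemma exp_aux (x : ℝ) (hx0 : 0 ≤ x) (hx : x ≤ 1/2) :
    Real.exp x * (1 + x) ≤ 1 + 4 * x := by
  have h1 : 1 - x ≤ Real.exp (-x) := by
    have := Real.add_one_le_exp (-x); linarith
  have h2 : (1 - x) * Real.exp x ≤ 1 := by
    calc (1 - x) * Real.exp x ≤ Real.exp (-x) * Real.exp x :=
          mul_le_mul_of_nonneg_right h1 (Real.exp_pos x).le
      _ = 1 := by rw [← Real.exp_add]; simp
  nlinarith [Real.exp_pos x, mul_nonneg hx0 hx0]

/-- Regularity of the joint flow map `a ↦ (Φ_h(a), f(Φ_h(a)))` in the weighted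
norm `|||a|||_h = ‖a₀‖ + h‖a₁‖`. -/
theorem stmt3 {d : ℕ} (f : EuclideanSpace ℝ (Fin d) → EuclideanSpace ℝ (Fin d))
    (L : ℝ≥0) (hf : LipschitzWith L f)
    (Φ : ℝ → EuclideanSpace ℝ (Fin d) → EuclideanSpace ℝ (Fin d))
    (hΦ0 : ∀ a, Φ 0 a = a)
    (hΦ : ∀ a t, HasDerivAt (fun s => Φ s a) (f (Φ t a)) t) :
    ∃ K > (0:ℝ), ∃ h₀ > (0:ℝ), ∀ h : ℝ, 0 < h → h < h₀ →
      ∀ a b : EuclideanSpace ℝ (Fin d), a ≠ b →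
        ‖Φ h a - Φ h b‖ + h * ‖f (Φ h a) - f (Φ h b)‖ ≤ (1 + K * h) * ‖a - b‖ := by
  refine ⟨4 * L + 1, by positivity, 1 / (2 * L + 2), by positivity, ?_⟩
  intro h hh0 hh1 a b hab
  -- Grönwall bound on the flows
  have key : dist (Φ h a) (Φ h b) ≤ dist a b * Real.exp (L * (h - 0)) := by
    refine dist_le_of_trajectories_ODE (v := fun _ x => f x) (fun _ => hf)
      (fun t _ => ((hΦ a t).continuousAt).continuousWithinAt)
      (fun t _ => (hΦ a t).hasDerivWithinAt)
      (fun t _ => ((hΦ b t).continuousAt).continuousWithinAt)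
      (fun t _ => (hΦ b t).hasDerivWithinAt)
      ?_ h ⟨hh0.le, le_refl h⟩
    rw [hΦ0 a, hΦ0 b]
  have hLh : (L : ℝ) * h ≤ 1 / 2 := by
    have h2L : (0:ℝ) < 2 * L + 2 := by positivity
    rw [lt_div_iff₀ h2L] at hh1
    nlinarith [L.2]
  have hflow : ‖Φ h a - Φ h b‖ ≤ ‖a - b‖ * Real.exp (L * h) := by
    simpa [dist_eq_norm] using key
  have hfl : ‖f (Φ h a) - f (Φ h b)‖ ≤ L * ‖Φ h a - Φ h b‖ := by
    simpa [dist_eq_norm] using hf.dist_le_mul (Φ h a) (Φ h b)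
  have hnn : (0:ℝ) ≤ ‖a - b‖ := norm_nonneg _
  have hexp := exp_aux ((L : ℝ) * h) (by positivity) hLh
  calc ‖Φ h a - Φ h b‖ + h * ‖f (Φ h a) - f (Φ h b)‖
      ≤ ‖Φ h a - Φ h b‖ + h * (L * ‖Φ h a - Φ h b‖) := by
        have := mul_le_mul_of_nonneg_left hfl hh0.le
        linarith
    _ = (1 + L * h) * ‖Φ h a - Φ h b‖ := by ring
    _ ≤ (1 + L * h) * (‖a - b‖ * Real.exp (L * h)) := by
        apply mul_le_mul_of_nonneg_left hflow
        positivity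
    _ = (Real.exp (L * h) * (1 + L * h)) * ‖a - b‖ := by ring
    _ ≤ (1 + 4 * (L * h)) * ‖a - b‖ := mul_le_mul_of_nonneg_right hexp hnn
    _ ≤ (1 + (4 * L + 1) * h) * ‖a - b‖ := by
        apply mul_le_mul_of_nonneg_right _ hnn
        nlinarith
end

section
/- Fix σ > 0, K > 0, p ≥ 1, and set R = R(h) = K h^p. Then there exist constants C > 0 and h₀ > 0 such that for all 0 < h < h₀, the steady-state predictive variance P₁₁^{-,∞}(h) = (σ²h + √(4σ²R h + σ⁴h²))/2 satisfies P₁₁^{-,∞}(h) ≤ C h^{min(1,(p+1)/2)}, and this exponent is sharp, i.e. also P₁₁^{-,∞}(h) ≥ c h^{min(1,(p+1)/2)} for some c > 0. -/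
/-- Sharp asymptotic order `h^{min(1,(p+1)/2)}` of the steady-state predictive
variance of the Gaussian ODE filter (q = 1, IBM prior) with noise `R = K h^p`. -/
theorem stmt7 (σ K p : ℝ) (hσ : 0 < σ) (hK : 0 < K) (hp : 1 ≤ p) :
    ∃ C > (0:ℝ), ∃ c > (0:ℝ), ∃ h₀ > (0:ℝ), ∀ h : ℝ, 0 < h → h < h₀ →
      c * h ^ (min 1 ((p + 1) / 2))
          ≤ (σ ^ 2 * h + Real.sqrt (4 * σ ^ 2 * (K * h ^ p) * h + σ ^ 4 * h ^ 2)) / 2 ∧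
      (σ ^ 2 * h + Real.sqrt (4 * σ ^ 2 * (K * h ^ p) * h + σ ^ 4 * h ^ 2)) / 2
          ≤ C * h ^ (min 1 ((p + 1) / 2)) := by
  have hmin : min (1:ℝ) ((p + 1) / 2) = 1 := min_eq_left (by linarith)
  have hσ2 : (0:ℝ) < σ ^ 2 := by positivity
  refine ⟨(σ ^ 2 + Real.sqrt (4 * σ ^ 2 * K + σ ^ 4)) / 2, by positivity,
    σ ^ 2 / 2, by positivity, 1, one_pos, ?_⟩
  intro h h0 h1
  rw [hmin, Real.rpow_one]
  have hsq0 : (0:ℝ) ≤ 4 * σ ^ 2 * (K * h ^ p) * h + σ ^ 4 * h ^ 2 := by positivity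
  constructor
  · have := Real.sqrt_nonneg (4 * σ ^ 2 * (K * h ^ p) * h + σ ^ 4 * h ^ 2)
    nlinarith
  · have hple : h ^ p ≤ h := by
      calc h ^ p ≤ h ^ (1:ℝ) :=
        Real.rpow_le_rpow_of_exponent_ge h0 h1.le hp
      _ = h := Real.rpow_one h
    have hb : 4 * σ ^ 2 * (K * h ^ p) * h + σ ^ 4 * h ^ 2
        ≤ (4 * σ ^ 2 * K + σ ^ 4) * h ^ 2 := by nlinarith [mul_le_mul_of_nonneg_right hple h0.le, sq_nonneg h, mul_pos hσ2 hK]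
    have hs : Real.sqrt (4 * σ ^ 2 * (K * h ^ p) * h + σ ^ 4 * h ^ 2)
        ≤ Real.sqrt (4 * σ ^ 2 * K + σ ^ 4) * h := by
      rw [show Real.sqrt (4 * σ ^ 2 * K + σ ^ 4) * h
          = Real.sqrt ((4 * σ ^ 2 * K + σ ^ 4) * h ^ 2) by
        rw [Real.sqrt_mul (by positivity), Real.sqrt_sq h0.le]]
      exact Real.sqrt_le_sqrt hb
    nlinarith
end

section
/- Fix σ > 0, K > 0, p ≥ 0 and set R = K h^p. Define P₁₁^∞(h) := (σ²h + √(4σ²Rh + σ⁴h²))·R / (σ²h + √(4σ²Rh + σ⁴h²) + 2R). Then there exist C > 0 and h₀ > 0 such that for all 0 < h < h₀, P₁₁^∞(h) ≤ C h^{max(p, (p+1)/2)}. -/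
lemma sqrt_add_le (a b : ℝ) (ha : 0 ≤ a) (hb : 0 ≤ b) :
    Real.sqrt (a + b) ≤ Real.sqrt a + Real.sqrt b := by
  have h := Real.sqrt_le_sqrt (show a + b ≤ (Real.sqrt a + Real.sqrt b) ^ 2 by
    nlinarith [Real.sq_sqrt ha, Real.sq_sqrt hb, Real.sqrt_nonneg a, Real.sqrt_nonneg b])
  rwa [Real.sqrt_sq (by positivity)] at h

lemma aux_le_b (a b : ℝ) (ha : 0 < a) (hb : 0 < b) : a * b / (a + 2 * b) ≤ b := by
  rw [div_le_iff₀ (by linarith)]; nlinarith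

lemma aux_le_half (a b : ℝ) (ha : 0 < a) (hb : 0 < b) : a * b / (a + 2 * b) ≤ a / 2 := by
  rw [div_le_iff₀ (by linarith)]; nlinarith

/-- Asymptotic order `h^{max(p,(p+1)/2)}` of the steady-state updated variance of
the Kalman ODE filter with q = 1, IBM prior and noise model `R = K h^p`. -/
theorem stmt8 (σ K p : ℝ) (hσ : 0 < σ) (hK : 0 < K) (hp : 0 ≤ p) :
    ∃ C > (0:ℝ), ∃ h₀ > (0:ℝ), ∀ h : ℝ, 0 < h → h < h₀ →
      (σ ^ 2 * h + Real.sqrt (4 * σ ^ 2 * (K * h ^ p) * h + σ ^ 4 * h ^ 2)) * (K * h ^ p) /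
          (σ ^ 2 * h + Real.sqrt (4 * σ ^ 2 * (K * h ^ p) * h + σ ^ 4 * h ^ 2) + 2 * (K * h ^ p))
        ≤ C * h ^ (max p ((p + 1) / 2)) := by
  by_cases h1 : 1 ≤ p
  · refine ⟨K, hK, 1, one_pos, fun h hh hh1 => ?_⟩
    have hmax : max p ((p + 1) / 2) = p := max_eq_left (by linarith)
    rw [hmax]
    have hR : 0 < K * h ^ p := mul_pos hK (Real.rpow_pos_of_pos hh p)
    have hS : 0 < σ ^ 2 * h + Real.sqrt (4 * σ ^ 2 * (K * h ^ p) * h + σ ^ 4 * h ^ 2) := by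
      have h1 := Real.sqrt_nonneg (4 * σ ^ 2 * (K * h ^ p) * h + σ ^ 4 * h ^ 2)
      have h2 : 0 < σ ^ 2 * h := by positivity
      linarith
    exact aux_le_b _ _ hS hR
  · push_neg at h1
    refine ⟨σ ^ 2 + σ * Real.sqrt K, by positivity, 1, one_pos, fun h hh hh1 => ?_⟩
    have hmax : max p ((p + 1) / 2) = (p + 1) / 2 := max_eq_right (by linarith)
    rw [hmax]
    have hR : 0 < K * h ^ p := mul_pos hK (Real.rpow_pos_of_pos hh p)
    set S := σ ^ 2 * h + Real.sqrt (4 * σ ^ 2 * (K * h ^ p) * h + σ ^ 4 * h ^ 2) with hSdef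
    have hS : 0 < S := by
      have h1 := Real.sqrt_nonneg (4 * σ ^ 2 * (K * h ^ p) * h + σ ^ 4 * h ^ 2)
      have h2 : 0 < σ ^ 2 * h := by positivity
      rw [hSdef]; linarith
    have step1 : S * (K * h ^ p) / (S + 2 * (K * h ^ p)) ≤ S / 2 := aux_le_half _ _ hS hR
    -- bound S
    have hhm : 0 < h ^ ((p + 1) / 2) := Real.rpow_pos_of_pos hh _
    have hsplit : Real.sqrt (4 * σ ^ 2 * (K * h ^ p) * h + σ ^ 4 * h ^ 2)
        ≤ Real.sqrt (4 * σ ^ 2 * (K * h ^ p) * h) + Real.sqrt (σ ^ 4 * h ^ 2) :=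
      sqrt_add_le _ _ (by positivity) (by positivity)
    have e1 : Real.sqrt (4 * σ ^ 2 * (K * h ^ p) * h) = 2 * σ * Real.sqrt K * h ^ ((p + 1) / 2) := by
      have hsq : (h ^ ((p + 1) / 2)) ^ 2 = h ^ p * h := by
        rw [← Real.rpow_natCast (h ^ ((p + 1) / 2)) 2, ← Real.rpow_mul hh.le,
          show (p + 1) / 2 * ((2:ℕ):ℝ) = p + 1 by push_cast; ring,
          Real.rpow_add hh, Real.rpow_one]
      have : 4 * σ ^ 2 * (K * h ^ p) * h = (2 * σ * Real.sqrt K * h ^ ((p + 1) / 2)) ^ 2 := by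
        rw [mul_pow, mul_pow, mul_pow, Real.sq_sqrt hK.le, hsq]; ring
      rw [this, Real.sqrt_sq (by positivity)]
    have e2 : Real.sqrt (σ ^ 4 * h ^ 2) = σ ^ 2 * h := by
      rw [show σ ^ 4 * h ^ 2 = (σ ^ 2 * h) ^ 2 by ring, Real.sqrt_sq (by positivity)]
    have hle : h ≤ h ^ ((p + 1) / 2) := by
      calc h = h ^ (1 : ℝ) := (Real.rpow_one h).symm
        _ ≤ h ^ ((p + 1) / 2) := Real.rpow_le_rpow_of_exponent_ge hh hh1.le (by linarith)
    have hSle : S ≤ 2 * (σ ^ 2 + σ * Real.sqrt K) * h ^ ((p + 1) / 2) := by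
      rw [hSdef]
      have hsK : 0 ≤ Real.sqrt K := Real.sqrt_nonneg K
      calc σ ^ 2 * h + Real.sqrt (4 * σ ^ 2 * (K * h ^ p) * h + σ ^ 4 * h ^ 2)
          ≤ σ ^ 2 * h + (2 * σ * Real.sqrt K * h ^ ((p + 1) / 2) + σ ^ 2 * h) := by
            rw [← e1, ← e2]; linarith
        _ ≤ 2 * (σ ^ 2 + σ * Real.sqrt K) * h ^ ((p + 1) / 2) := by nlinarith
    calc S * (K * h ^ p) / (S + 2 * (K * h ^ p)) ≤ S / 2 := step1
      _ ≤ (σ ^ 2 + σ * Real.sqrt K) * h ^ ((p + 1) / 2) := by linarith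
end

section
/- Let F ∈ ℝ^{(q+1)×(q+1)} be the companion-type matrix with F_{i,i+1} = 1 for i ∈ {0,...,q−1}, F_{q,q} = −θ for θ ≥ 0, and all other entries 0. Then for all h, the matrix exponential A(h) = exp(hF) satisfies: A(h)_{ij} = 𝟙_{i≤j} h^{j−i}/(j−i)! for j ≠ q, and A(h)_{iq} = h^{q−i}/(q−i)! − θ Σ_{k=q+1−i}^∞ (−θ)^{k+i−q−1} h^k / k!. -/
/-!
Row `i < q` of `F * M` is row `i + 1` of `M`, and row `q` of `F * M` is `-θ` times row `q` of `M`.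
Hence `(F ^ n) i j = 𝟙[j = i + n]` off the last column and `(F ^ n) i q = (-θ) ^ (n - (q - i))`
for `n ≥ q - i`. Summing `hⁿ (F ^ n) i j / n!` entrywise gives the formula: in the last column the
term `n = q - i` is `h ^ (q - i) / (q - i)!`, and every later term carries a factor `-θ`.
-/

open Matrix
open scoped Nat

lemma Matrix.exp_smul_apply_eq_tsum {m : Type*} [Fintype m] [DecidableEq m] (t : ℝ)
    (A : Matrix m m ℝ) (i j : m) :
    NormedSpace.exp (t • A) i j = ∑' k : ℕ, t ^ k * (A ^ k) i j / k ! := by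
  let _ := Matrix.linftyOpNormedRing (n := m) (α := ℝ)
  let _ := Matrix.linftyOpNormedAlgebra (n := m) (α := ℝ) (R := ℝ)
  have hs := NormedSpace.expSeries_summable' (𝕂 := ℝ) (t • A)
  rw [NormedSpace.exp_eq_tsum ℝ]
  refine (Pi.hasSum.1 (Pi.hasSum.1 hs.hasSum i) j).tsum_eq.symm.trans (tsum_congr fun k => ?_)
  simp only [smul_pow, smul_apply, smul_eq_mul]
  ring

lemma summable_ite_pow_mul_pow_div_factorial (p : ℕ → Prop) [DecidablePred p] (x y : ℝ)
    {e : ℕ → ℕ} (he : ∀ k, e k ≤ k) :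
    Summable fun k => if p k then x ^ e k * y ^ k / k ! else 0 := by
  refine .of_norm_bounded (Real.summable_pow_div_factorial ((1 + |x|) * |y|)) fun k => ?_
  split_ifs
  · rw [norm_div, norm_mul, norm_pow, norm_pow, Real.norm_eq_abs, Real.norm_eq_abs,
      Real.norm_natCast, mul_pow]
    gcongr
    calc |x| ^ e k ≤ (1 + |x|) ^ e k := by gcongr; linarith
      _ ≤ (1 + |x|) ^ k := pow_le_pow_right₀ (by linarith [abs_nonneg x]) (he k)
  · rw [norm_zero]; positivity

def integratedOUDrift (q : ℕ) (θ : ℝ) : Matrix (Fin (q + 1)) (Fin (q + 1)) ℝ :=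
  of fun i j => if (j : ℕ) = i + 1 then 1 else if (i : ℕ) = q ∧ (j : ℕ) = q then -θ else 0

section integratedOUDrift

variable {q : ℕ} {θ : ℝ}

lemma integratedOUDrift_mul_apply_of_lt {i : Fin (q + 1)} (hi : (i : ℕ) < q)
    (M : Matrix (Fin (q + 1)) (Fin (q + 1)) ℝ) (j : Fin (q + 1)) :
    (integratedOUDrift q θ * M) i j = M ⟨i + 1, by omega⟩ j := by
  rw [mul_apply, Finset.sum_eq_single ⟨i + 1, by omega⟩]
  · simp [integratedOUDrift]
  · intro k _ hk
    have hk' : (k : ℕ) ≠ i + 1 := fun h => hk (Fin.ext h)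
    simp only [integratedOUDrift, of_apply]
    rw [if_neg hk', if_neg (by omega), zero_mul]
  · simp

lemma integratedOUDrift_mul_apply_last (M : Matrix (Fin (q + 1)) (Fin (q + 1)) ℝ)
    (j : Fin (q + 1)) : (integratedOUDrift q θ * M) (Fin.last q) j = -θ * M (Fin.last q) j := by
  rw [mul_apply, Finset.sum_eq_single (Fin.last q)]
  · simp [integratedOUDrift]
  · intro k _ hk
    have hk' : (k : ℕ) ≠ q := fun h => hk (Fin.ext h)
    have := k.is_le
    simp only [integratedOUDrift, of_apply, Fin.val_last]
    rw [if_neg (by omega), if_neg (by omega), zero_mul]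
  · simp

lemma integratedOUDrift_pow_apply (n : ℕ) (i j : Fin (q + 1)) :
    (integratedOUDrift q θ ^ n) i j =
      if (j : ℕ) = q then (if q - i ≤ n then (-θ) ^ (n - (q - i)) else 0)
      else if (j : ℕ) = i + n then 1 else 0 := by
  induction n generalizing i with
  | zero =>
    have := i.is_le
    have := j.is_le
    simp only [pow_zero, one_apply, Fin.ext_iff, zero_tsub, add_zero]
    split_ifs <;> first | rfl | omega
  | succ n ih =>
    have := j.is_le
    rw [pow_succ']
    rcases Nat.lt_or_eq_of_le i.is_le with hi | hi
    · rw [integratedOUDrift_mul_apply_of_lt hi, ih]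
      dsimp only
      split_ifs <;> first | omega | rfl | (congr 1; omega)
    · obtain rfl : i = Fin.last q := Fin.ext hi
      rw [integratedOUDrift_mul_apply_last, ih]
      simp only [Fin.val_last, Nat.sub_self, zero_le, if_true, Nat.sub_zero]
      split_ifs <;> first | omega | ring

lemma exp_smul_integratedOUDrift_apply_of_ne (t : ℝ) (i : Fin (q + 1)) {j : Fin (q + 1)}
    (hj : (j : ℕ) ≠ q) :
    NormedSpace.exp (t • integratedOUDrift q θ) i j =
      if (i : ℕ) ≤ j then t ^ ((j : ℕ) - i) / ((j : ℕ) - i)! else 0 := by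
  simp only [Matrix.exp_smul_apply_eq_tsum, integratedOUDrift_pow_apply, if_neg hj]
  rw [tsum_eq_single ((j : ℕ) - i)]
  · split_ifs <;> first | omega | simp
  · intro n hn
    rw [if_neg (by omega), mul_zero, zero_div]

lemma exp_smul_integratedOUDrift_apply_last (t : ℝ) (i : Fin (q + 1)) :
    NormedSpace.exp (t • integratedOUDrift q θ) i (Fin.last q) =
      t ^ (q - i) / (q - i)! - θ * ∑' k : ℕ,
        if q + 1 - i ≤ k then (-θ) ^ (k + i - (q + 1)) * t ^ k / k ! else 0 := by
  have hi := i.is_le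
  have hsplit : ∀ n : ℕ, t ^ n * (if q - i ≤ n then (-θ) ^ (n - (q - i)) else 0) / n ! =
      (if n = q - i then t ^ (q - i) / (q - i)! else 0) +
        -θ * (if q + 1 - i ≤ n then (-θ) ^ (n + i - (q + 1)) * t ^ n / n ! else 0) := by
    intro n
    rcases lt_trichotomy n (q - i) with hn | rfl | hn
    · rw [if_neg (by omega), if_neg (by omega), if_neg (by omega)]
      ring
    · rw [if_pos le_rfl, if_pos rfl, if_neg (by omega), Nat.sub_self]
      ring
    · rw [if_pos (by omega), if_neg (by omega), if_pos (by omega),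
        show n - (q - i) = n + i - (q + 1) + 1 by omega]
      ring
  simp only [Matrix.exp_smul_apply_eq_tsum, integratedOUDrift_pow_apply, Fin.val_last, if_true]
  rw [tsum_congr hsplit, Summable.tsum_add (hasSum_ite_eq _ _).summable
    ((summable_ite_pow_mul_pow_div_factorial _ _ _ fun k => by omega).mul_left _),
    tsum_ite_eq, tsum_mul_left]
  ring

end integratedOUDrift

theorem stmt18_general (q : ℕ) (θ : ℝ)
    (F : Matrix (Fin (q + 1)) (Fin (q + 1)) ℝ)
    (hF : ∀ i j : Fin (q + 1),
      F i j = if (j : ℕ) = (i : ℕ) + 1 then 1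
        else if (i : ℕ) = q ∧ (j : ℕ) = q then -θ else 0) :
    ∀ (h : ℝ) (i j : Fin (q + 1)),
      NormedSpace.exp (h • F) i j =
        if (j : ℕ) ≠ q then
          (if (i : ℕ) ≤ (j : ℕ) then
            h ^ ((j : ℕ) - (i : ℕ)) / (Nat.factorial ((j : ℕ) - (i : ℕ)) : ℝ) else 0)
        else
          h ^ (q - (i : ℕ)) / (Nat.factorial (q - (i : ℕ)) : ℝ) -
            θ * ∑' k : ℕ, if q + 1 - (i : ℕ) ≤ k then
              (-θ) ^ (k + (i : ℕ) - (q + 1)) * h ^ k / (Nat.factorial k : ℝ) else 0 := by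
  obtain rfl : F = integratedOUDrift q θ := Matrix.ext hF
  intro h i j
  by_cases hj : (j : ℕ) = q
  · obtain rfl : j = Fin.last q := Fin.ext hj
    rw [if_neg (not_not.2 hj), exp_smul_integratedOUDrift_apply_last]
  · rw [if_pos hj, exp_smul_integratedOUDrift_apply_of_ne h i hj]

/-- Explicit matrix exponential of the drift matrix of the q-times integrated
Ornstein–Uhlenbeck SDE with drift parameter θ (θ = 0 giving the q-times
integrated Brownian motion). -/
theorem stmt18 (q : ℕ) (θ : ℝ) (hθ : 0 ≤ θ)
    (F : Matrix (Fin (q + 1)) (Fin (q + 1)) ℝ)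
    (hF : ∀ i j : Fin (q + 1),
      F i j = if (j : ℕ) = (i : ℕ) + 1 then 1
        else if (i : ℕ) = q ∧ (j : ℕ) = q then -θ else 0) :
    ∀ (h : ℝ) (i j : Fin (q + 1)),
      NormedSpace.exp (h • F) i j =
        if (j : ℕ) ≠ q then
          (if (i : ℕ) ≤ (j : ℕ) then
            h ^ ((j : ℕ) - (i : ℕ)) / (Nat.factorial ((j : ℕ) - (i : ℕ)) : ℝ) else 0)
        else
          h ^ (q - (i : ℕ)) / (Nat.factorial (q - (i : ℕ)) : ℝ) -
            θ * ∑' k : ℕ, if q + 1 - (i : ℕ) ≤ k then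
              (-θ) ^ (k + (i : ℕ) - (q + 1)) * h ^ k / (Nat.factorial k : ℝ) else 0 :=
  stmt18_general q θ F hF
end
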